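/- Let R be an L×L real non-singular upper triangular matrix with pairwise distinct diagonal entries, let p_{i,j,k} denote its power factors, let e, q₀ ∈ ℝ^L, let f_opt > 0, let f₀ < f_opt be the initial fitness value with f_opt − f₀ = eᵀ q₀, and define c_k := (Σ_{i=1}^{L} Σ_{j=i}^{L} e_i p_{i,j,k} q₀(j))/f_opt for k = 1, …, L. Then for every integer t ≥ 1, the average convergence rate R_t := 1 − ((eᵀ R^t q₀)/(f_opt − f₀))^{1/t} satisfies R_t = 1 − (Σ_{k=1}^{L} c_k (λ_k)^{t-1} · f_opt/(f_opt − f₀))^{1/t}, where λ_k = r_{k,k}. -/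

import Mathlib

/-
Write `P_k` for the matrix of power factors `(p_{i,j,k})_{i,j}`. The recursion for `p_{i,j,k}`
with `k < j` is the `(i,j)` entry of `P_k R = λ_k P_k` solved for `p_{i,j,k}` (this is where
`λ_k ≠ λ_j` enters), and the recursion for `p_{i,j,j}` says `∑_k P_k = R`. Together they give
`R^(t+1) = ∑_k λ_k^t P_k`, and pairing with `e` and `q₀` yields the closed form.
-/

open Matrix Finset

/-- The power factors `p i j k` of a matrix with entries `r i j`
(indices `1, …, L`), defined recursively by: `p j j j = r j j`;
`p i j k = 0` if `k < i` or `k > j`;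
`p i j k = (∑ l = k to j-1, p i l k * r l j) / (r k k - r j j)` for `i ≤ k < j`;
`p i j j = r i j - ∑ l = i to j-1, p i j l` for `i < j`. -/
noncomputable def powerFactor (r : ℕ → ℕ → ℝ) : ℕ → ℕ → ℕ → ℝ
  | i, j, k =>
    if _h0 : k < i ∨ j < k then 0
    else if _h1 : k < j then
      (∑ l ∈ (Finset.Icc k (j - 1)).attach,
        powerFactor r i l.1 k * r l.1 j) / (r k k - r j j)
    else if _h2 : i < j then
      r i j - ∑ l ∈ (Finset.Icc i (j - 1)).attach, powerFactor r i j l.1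
    else r j j
termination_by i j k => (j, k)
decreasing_by
  · have := Finset.mem_Icc.mp l.2
    exact Prod.Lex.left _ _ (by omega)
  · have := Finset.mem_Icc.mp l.2
    exact Prod.Lex.right _ (by omega)

section PowerFactor

variable {r : ℕ → ℕ → ℝ} {i j k : ℕ}

theorem powerFactor_of_lt_or_lt (h : k < i ∨ j < k) : powerFactor r i j k = 0 := by
  rw [powerFactor, dif_pos h]

theorem powerFactor_of_notMem_Icc (h : k ∉ Icc i j) : powerFactor r i j k = 0 :=
  powerFactor_of_lt_or_lt (by rw [mem_Icc] at h; omega)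

theorem powerFactor_of_le_of_lt (hik : i ≤ k) (hkj : k < j) :
    powerFactor r i j k =
      (∑ l ∈ Icc k (j - 1), powerFactor r i l k * r l j) / (r k k - r j j) := by
  rw [powerFactor, dif_neg (by omega), dif_pos hkj,
    sum_attach _ (fun l => powerFactor r i l k * r l j)]

theorem powerFactor_self_of_lt (h : i < j) :
    powerFactor r i j j = r i j - ∑ l ∈ Icc i (j - 1), powerFactor r i j l := by
  rw [powerFactor, dif_neg (by omega), dif_neg (by omega), dif_pos h,
    sum_attach _ (fun l => powerFactor r i j l)]

theorem powerFactor_self (j : ℕ) : powerFactor r j j j = r j j := by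
  rw [powerFactor, dif_neg (by omega), dif_neg (by omega), dif_neg (by omega)]

theorem sum_Icc_powerFactor (h : j < i → r i j = 0) :
    ∑ k ∈ Icc i j, powerFactor r i j k = r i j := by
  rcases lt_trichotomy i j with hij | rfl | hji
  · obtain ⟨m, rfl⟩ := Nat.exists_eq_add_of_lt hij
    rw [sum_Icc_succ_top (by omega), powerFactor_self_of_lt hij, Nat.add_sub_cancel]
    ring
  · rw [Icc_self, sum_singleton, powerFactor_self]
  · rw [Icc_eq_empty (by omega), sum_empty, h hji]

theorem sum_Icc_powerFactor_mul (hne : k < j → r k k ≠ r j j) :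
    ∑ l ∈ Icc k j, powerFactor r i l k * r l j = powerFactor r i j k * r k k := by
  rcases lt_or_ge k i with hki | hik
  · simp only [powerFactor_of_lt_or_lt (Or.inl hki), zero_mul, sum_const_zero]
  rcases lt_trichotomy k j with hkj | rfl | hjk
  · obtain ⟨m, rfl⟩ := Nat.exists_eq_add_of_lt hkj
    have hden : r k k - r (k + m + 1) (k + m + 1) ≠ 0 := sub_ne_zero.mpr (hne hkj)
    rw [sum_Icc_succ_top (by omega), powerFactor_of_le_of_lt hik hkj, Nat.add_sub_cancel]
    field_simp
    ring
  · rw [Icc_self, sum_singleton]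
  · rw [Icc_eq_empty (by omega), sum_empty, powerFactor_of_lt_or_lt (Or.inr hjk), zero_mul]

end PowerFactor

theorem sum_fin_eq_sum_Icc {M : Type*} [AddCommMonoid M] (L : ℕ) (g : ℕ → M) :
    ∑ a : Fin L, g (a + 1) = ∑ l ∈ Icc 1 L, g l := by
  rw [Fin.sum_univ_eq_sum_range (fun l => g (l + 1)), range_eq_Ico, sum_Ico_add' g, zero_add,
    Ico_add_one_right_eq_Icc]

noncomputable def powerFactorMatrix (r : ℕ → ℕ → ℝ) (L k : ℕ) : Matrix (Fin L) (Fin L) ℝ :=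
  of fun a b => powerFactor r (a + 1) (b + 1) k

section PowerFactorMatrix

variable {L : ℕ} {r : ℕ → ℕ → ℝ}

theorem sum_powerFactorMatrix
    (htri : ∀ i j, 1 ≤ i → i ≤ L → 1 ≤ j → j ≤ L → j < i → r i j = 0) :
    ∑ k ∈ Icc 1 L, powerFactorMatrix r L k = of fun a b : Fin L => r (a + 1) (b + 1) := by
  ext a b
  have hsub : Icc (a.val + 1) (b + 1) ⊆ Icc 1 L := Icc_subset_Icc (by omega) b.2
  rw [Matrix.sum_apply, of_apply, ← sum_Icc_powerFactor (htri _ _ (by omega) a.2 (by omega) b.2),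
    sum_subset hsub fun k _ hk => powerFactor_of_notMem_Icc hk]
  rfl

theorem powerFactorMatrix_mul
    (htri : ∀ i j, 1 ≤ i → i ≤ L → 1 ≤ j → j ≤ L → j < i → r i j = 0)
    (hdist : ∀ i j, 1 ≤ i → i ≤ L → 1 ≤ j → j ≤ L → i ≠ j → r i i ≠ r j j)
    {k : ℕ} (hk : k ∈ Icc 1 L) :
    powerFactorMatrix r L k * (of fun a b : Fin L => r (a + 1) (b + 1)) =
      r k k • powerFactorMatrix r L k := by
  rw [mem_Icc] at hk
  ext a b
  have hsub : Icc k (b + 1) ⊆ Icc 1 L := Icc_subset_Icc hk.1 b.2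
  have hzero : ∀ l ∈ Icc 1 L, l ∉ Icc k (b + 1) →
      powerFactor r (a + 1) l k * r l (b + 1) = 0 := by
    intro l hl hl'
    rw [mem_Icc] at hl hl'
    rcases lt_or_ge l k with hlk | hkl
    · rw [powerFactor_of_lt_or_lt (Or.inr hlk), zero_mul]
    · rw [htri l (b + 1) hl.1 hl.2 (by omega) b.2 (by omega), mul_zero]
  simp only [mul_apply, powerFactorMatrix, of_apply, Matrix.smul_apply, smul_eq_mul]
  rw [sum_fin_eq_sum_Icc L (fun l => powerFactor r (a + 1) l k * r l (b + 1)),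
    ← sum_subset hsub hzero,
    sum_Icc_powerFactor_mul fun h => hdist _ _ hk.1 hk.2 (by omega) b.2 h.ne, mul_comm]

theorem pow_succ_eq_sum_smul_powerFactorMatrix
    (htri : ∀ i j, 1 ≤ i → i ≤ L → 1 ≤ j → j ≤ L → j < i → r i j = 0)
    (hdist : ∀ i j, 1 ≤ i → i ≤ L → 1 ≤ j → j ≤ L → i ≠ j → r i i ≠ r j j) (t : ℕ) :
    (of fun a b : Fin L => r (a + 1) (b + 1)) ^ (t + 1) =
      ∑ k ∈ Icc 1 L, r k k ^ t • powerFactorMatrix r L k := by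
  induction t with
  | zero => simp only [zero_add, pow_one, pow_zero, one_smul, sum_powerFactorMatrix htri]
  | succ t ih =>
    rw [pow_succ, ih, sum_mul]
    refine sum_congr rfl fun k hk => ?_
    rw [smul_mul_assoc, powerFactorMatrix_mul htri hdist hk, smul_smul, pow_succ]

theorem dotProduct_powerFactorMatrix_mulVec (e q : ℕ → ℝ) (k : ℕ) :
    (fun a : Fin L => e (a + 1)) ⬝ᵥ (powerFactorMatrix r L k *ᵥ fun a => q (a + 1)) =
      ∑ i ∈ Icc 1 L, ∑ j ∈ Icc i L, e i * powerFactor r i j k * q j := by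
  simp only [dotProduct, mulVec, powerFactorMatrix, of_apply, mul_sum, ← mul_assoc]
  rw [← sum_fin_eq_sum_Icc L fun i => ∑ j ∈ Icc i L, e i * powerFactor r i j k * q j]
  refine sum_congr rfl fun a _ => ?_
  rw [sum_fin_eq_sum_Icc L fun j => e (a + 1) * powerFactor r (a + 1) j k * q j]
  refine (sum_subset (Icc_subset_Icc_left (by omega)) fun j hjL hj => ?_).symm
  rw [mem_Icc] at hjL hj
  rw [powerFactor_of_lt_or_lt (by omega), mul_zero, zero_mul]

end PowerFactorMatrix

theorem average_convergence_rate_closed_form_general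
    (L : ℕ) (r : ℕ → ℕ → ℝ)
    (htri : ∀ i j, 1 ≤ i → i ≤ L → 1 ≤ j → j ≤ L → j < i → r i j = 0)
    (hdist : ∀ i j, 1 ≤ i → i ≤ L → 1 ≤ j → j ≤ L → i ≠ j → r i i ≠ r j j)
    (R : Matrix (Fin L) (Fin L) ℝ)
    (hR : R = Matrix.of fun a b : Fin L => r (a.val + 1) (b.val + 1))
    (e q₀ : ℕ → ℝ) (fopt f₀ : ℝ) (hfopt : 0 < fopt)
    (Rate : ℕ → ℝ)
    (hRate : ∀ t : ℕ, Rate t = 1 -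
      (((fun a : Fin L => e (a.val + 1)) ⬝ᵥ
        ((R ^ t) *ᵥ fun a : Fin L => q₀ (a.val + 1))) / (fopt - f₀))
        ^ ((1 : ℝ) / t))
    (c : ℕ → ℝ)
    (hc : ∀ k, c k =
      (∑ i ∈ Finset.Icc 1 L, ∑ j ∈ Finset.Icc i L,
        e i * powerFactor r i j k * q₀ j) / fopt) :
    ∀ t : ℕ, 1 ≤ t →
      Rate t = 1 - ((∑ k ∈ Finset.Icc 1 L, c k * (r k k) ^ (t - 1)) *
        fopt / (fopt - f₀)) ^ ((1 : ℝ) / t) := by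
  intro t ht
  obtain ⟨s, rfl⟩ := Nat.exists_eq_add_of_le' ht
  have hnum : (fun a : Fin L => e (a + 1)) ⬝ᵥ (R ^ (s + 1) *ᵥ fun a => q₀ (a + 1)) =
      (∑ k ∈ Icc 1 L, c k * r k k ^ s) * fopt := by
    rw [hR, pow_succ_eq_sum_smul_powerFactorMatrix htri hdist, sum_mulVec, dotProduct_sum,
      sum_mul]
    refine sum_congr rfl fun k _ => ?_
    rw [smul_mulVec, dotProduct_smul, dotProduct_powerFactorMatrix_mulVec, hc, smul_eq_mul]
    field_simp
  rw [hRate, hnum, Nat.add_sub_cancel]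

/-- Corollary 2: under the same setting as Theorem 1, with
initial fitness `f₀ < f_opt` satisfying `f_opt − f₀ = eᵀ q₀`, the average
convergence rate `R t = 1 − ((eᵀ R^t q₀)/(f_opt − f₀))^(1/t)` satisfies, for
every `t ≥ 1`,
`R t = 1 − (∑_{k=1}^{L} c k * (λ k)^(t-1) * f_opt/(f_opt − f₀))^(1/t)`
where `λ k = r k k`. -/
theorem average_convergence_rate_closed_form
    (L : ℕ) (hL : 1 ≤ L) (r : ℕ → ℕ → ℝ)
    (htri : ∀ i j, 1 ≤ i → i ≤ L → 1 ≤ j → j ≤ L → j < i → r i j = 0)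
    (hnonsing : ∀ i, 1 ≤ i → i ≤ L → r i i ≠ 0)
    (hdist : ∀ i j, 1 ≤ i → i ≤ L → 1 ≤ j → j ≤ L → i ≠ j → r i i ≠ r j j)
    (R : Matrix (Fin L) (Fin L) ℝ)
    (hR : R = Matrix.of fun a b : Fin L => r (a.val + 1) (b.val + 1))
    (e q₀ : ℕ → ℝ) (fopt f₀ : ℝ) (hfopt : 0 < fopt) (hf₀ : f₀ < fopt)
    (hinit : fopt - f₀ =
      (fun a : Fin L => e (a.val + 1)) ⬝ᵥ (fun a : Fin L => q₀ (a.val + 1)))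
    (Rate : ℕ → ℝ)
    (hRate : ∀ t : ℕ, Rate t = 1 -
      (((fun a : Fin L => e (a.val + 1)) ⬝ᵥ
        ((R ^ t) *ᵥ fun a : Fin L => q₀ (a.val + 1))) / (fopt - f₀))
        ^ ((1 : ℝ) / t))
    (c : ℕ → ℝ)
    (hc : ∀ k, c k =
      (∑ i ∈ Finset.Icc 1 L, ∑ j ∈ Finset.Icc i L,
        e i * powerFactor r i j k * q₀ j) / fopt) :
    ∀ t : ℕ, 1 ≤ t →
      Rate t = 1 - ((∑ k ∈ Finset.Icc 1 L, c k * (r k k) ^ (t - 1)) *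
        fopt / (fopt - f₀)) ^ ((1 : ℝ) / t) :=
  average_convergence_rate_closed_form_general L r htri hdist R hR e q₀ fopt f₀ hfopt Rate hRate c
    hc
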